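/- Let G be a group, t ∈ G with t² = e, θ the inner automorphism g ↦ t g t⁻¹, and H = G^θ = Z_G(t) the centralizer of t. If F is a maximal element, under inclusion, of the set of elementary abelian 2-subgroups of G that contain t and are generated by conjugates of t, then X = {gH ∈ G/H : g t g⁻¹ ∈ F} is a maximal antipodal set in G/H containing the origin o = eH. -/

import Mathlib

/-- `X ⊆ G ⧸ H` is antipodal if `φ(g₂⁻¹g₁) ∈ H` for all cosets `g₁H, g₂H ∈ X`,
where `φ(g) = g·θ(g)⁻¹` is the Cartan quadratic map. -/
def IsAntipodal {G : Type*} [Group G] (θ : G → G) (H : Subgroup G) (X : Set (G ⧸ H)) : Prop :=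
  ∀ g₁ g₂ : G, (QuotientGroup.mk g₁ : G ⧸ H) ∈ X → (QuotientGroup.mk g₂ : G ⧸ H) ∈ X →
    (g₂⁻¹ * g₁) * (θ (g₂⁻¹ * g₁))⁻¹ ∈ H

def MaximalAntipodal {G : Type*} [Group G] (θ : G → G) (H : Subgroup G) (X : Set (G ⧸ H)) : Prop :=
  IsAntipodal θ H X ∧ ∀ Y : Set (G ⧸ H), IsAntipodal θ H Y → X ⊆ Y → Y = X

/-
The coset `gH` determines the involution `g t g⁻¹`, since `H` is the centralizer of `t`. The
Cartan map `φ(c) = c t c⁻¹ t⁻¹` lies in `H` exactly when `c t c⁻¹` commutes with `t`, so two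
cosets `g₁H, g₂H` are antipodal to each other iff their involutions commute. Hence `X` is
antipodal because `F` is abelian. If an antipodal `Y ⊇ X` contains `gH`, then `g t g⁻¹` commutes
with every generator of `F`, so adjoining it to `F` gives again an elementary abelian 2-group
generated by conjugates of `t`; maximality of `F` puts `g t g⁻¹` in `F`, i.e. `gH ∈ X`.
-/

open Subgroup

section

variable {G : Type*} [Group G]

theorem Subgroup.commute_of_forall_sq_eq_one {K : Subgroup G} (hK : ∀ x ∈ K, x ^ 2 = 1)
    {a b : G} (ha : a ∈ K) (hb : b ∈ K) : Commute a b :=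
  (Commute.of_orderOf_dvd_two
    (fun x : K => orderOf_dvd_of_pow_eq_one (Subtype.ext (hK x x.2))) ⟨a, ha⟩ ⟨b, hb⟩).map
    K.subtype

theorem Subgroup.sq_eq_one_of_mem_closure {s : Set G}
    (hcomm : ∀ x ∈ s, ∀ y ∈ s, x * y = y * x) (hsq : ∀ x ∈ s, x ^ 2 = 1) {x : G}
    (hx : x ∈ closure s) : x ^ 2 = 1 := by
  have := isMulCommutative_closure hcomm
  induction hx using closure_induction with
  | mem x hx => exact hsq x hx
  | one => exact one_pow 2
  | mul x y hx hy hx2 hy2 =>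
    rw [Commute.mul_pow (setLike_mul_comm hx hy), hx2, hy2, one_mul]
  | inv x _ hx2 => rw [inv_pow, hx2, inv_one]

def IsElemAbelianGenByConj (t : G) (F : Subgroup G) : Prop :=
  (∀ a ∈ F, a ^ 2 = 1) ∧ t ∈ F ∧
    ∃ S ⊆ {y : G | ∃ g : G, y = g * t * g⁻¹}, closure S = F

namespace IsElemAbelianGenByConj

variable {t : G} {F : Subgroup G}

theorem sup_zpowers (ht : t ^ 2 = 1) (hF : IsElemAbelianGenByConj t F) {g : G}
    (hcomm : ∀ f ∈ F, (∃ g' : G, f = g' * t * g'⁻¹) → Commute (g * t * g⁻¹) f) :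
    IsElemAbelianGenByConj t (F ⊔ zpowers (g * t * g⁻¹)) := by
  obtain ⟨hFsq, htF, S, hS, rfl⟩ := hF
  have hgen : closure (S ∪ {g * t * g⁻¹}) = closure S ⊔ zpowers (g * t * g⁻¹) := by
    rw [Subgroup.closure_union, zpowers_eq_closure]
  refine ⟨fun x hx => ?_, mem_sup_left htF, S ∪ {g * t * g⁻¹},
    Set.union_subset hS (Set.singleton_subset_iff.mpr ⟨g, rfl⟩), hgen⟩
  rw [← hgen] at hx
  refine sq_eq_one_of_mem_closure ?_ ?_ hx
  · rintro x (hx | rfl) y (hy | rfl)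
    · exact commute_of_forall_sq_eq_one hFsq (subset_closure hx) (subset_closure hy)
    · exact (hcomm x (subset_closure hx) (hS hx)).symm
    · exact hcomm y (subset_closure hy) (hS hy)
    · rfl
  · rintro x (hx | rfl)
    · exact hFsq x (subset_closure hx)
    · rw [conj_pow, ht, mul_one, mul_inv_cancel]

theorem conj_mem_of_maximal (ht : t ^ 2 = 1) (hF : IsElemAbelianGenByConj t F)
    (hmax : ∀ F' : Subgroup G, IsElemAbelianGenByConj t F' → F ≤ F' → F' = F) {g : G}
    (hcomm : ∀ f ∈ F, (∃ g' : G, f = g' * t * g'⁻¹) → Commute (g * t * g⁻¹) f) :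
    g * t * g⁻¹ ∈ F :=
  hmax _ (hF.sup_zpowers ht hcomm) le_sup_left ▸ mem_sup_right (mem_zpowers _)

end IsElemAbelianGenByConj

theorem conj_eq_conj_of_mk_eq {t g₁ g₂ : G}
    (h : (g₁ : G ⧸ centralizer {t}) = g₂) : g₁ * t * g₁⁻¹ = g₂ * t * g₂⁻¹ := by
  have hc : g₁⁻¹ * g₂ * t = t * (g₁⁻¹ * g₂) :=
    mem_centralizer_singleton_iff.mp (QuotientGroup.eq.mp h)
  calc g₁ * t * g₁⁻¹ = g₁ * (t * (g₁⁻¹ * g₂)) * g₂⁻¹ := by group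
    _ = g₂ * t * g₂⁻¹ := by rw [← hc]; group

theorem mk_mem_setOf_conj_mem_iff (t : G) (F : Subgroup G) (g : G) :
    (g : G ⧸ centralizer {t}) ∈
        {x : G ⧸ centralizer {t} | ∃ g' : G, (g' : G ⧸ centralizer {t}) = x ∧ g' * t * g'⁻¹ ∈ F} ↔
      g * t * g⁻¹ ∈ F :=
  ⟨fun ⟨_, hg', hF⟩ => conj_eq_conj_of_mk_eq hg' ▸ hF, fun h => ⟨g, rfl, h⟩⟩

theorem cartan_mem_centralizer_iff (t g₁ g₂ : G) :
    g₂⁻¹ * g₁ * (t * (g₂⁻¹ * g₁) * t⁻¹)⁻¹ ∈ centralizer {t} ↔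
      Commute (g₁ * t * g₁⁻¹) (g₂ * t * g₂⁻¹) := by
  set c := g₂⁻¹ * g₁
  have hφ : c * (t * c * t⁻¹)⁻¹ = c * t * c⁻¹ * t⁻¹ := by group
  have hconj : g₂ * (c * t * c⁻¹) * g₂⁻¹ = g₁ * t * g₁⁻¹ := by simp only [c]; group
  calc _ ↔ Commute (c * t * c⁻¹ * t⁻¹) t := by rw [hφ]; exact mem_centralizer_singleton_iff
    _ ↔ Commute (c * t * c⁻¹) t :=
      ⟨fun h => by simpa using h.mul_left (Commute.refl t),
        fun h => h.mul_left (Commute.refl t).inv_left⟩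
    _ ↔ Commute (g₂ * (c * t * c⁻¹) * g₂⁻¹) (g₂ * t * g₂⁻¹) := (Commute.conj_iff g₂).symm
    _ ↔ _ := by rw [hconj]

end

/-- for `θ` the inner involution `g ↦ tgt⁻¹` (`t² = 1`) and `H = Z_G(t)`, if `F`
is a maximal element of the set of elementary abelian 2-subgroups of `G` containing `t` and
generated by conjugates of `t`, then `X = {gH : gtg⁻¹ ∈ F}` is a maximal antipodal set in `G/H`
containing the origin. -/
theorem stmt_7 {G : Type*} [Group G] (t : G) (ht : t ^ 2 = 1)
    (H : Subgroup G) (hH : H = Subgroup.centralizer {t})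
    (F : Subgroup G)
    (hF : (∀ a ∈ F, a ^ 2 = 1) ∧ t ∈ F ∧
      ∃ S ⊆ {y : G | ∃ g : G, y = g * t * g⁻¹}, Subgroup.closure S = F)
    (hFmax : ∀ F' : Subgroup G,
      ((∀ a ∈ F', a ^ 2 = 1) ∧ t ∈ F' ∧
        ∃ S ⊆ {y : G | ∃ g : G, y = g * t * g⁻¹}, Subgroup.closure S = F') →
      F ≤ F' → F' = F) :
    (QuotientGroup.mk (1 : G) : G ⧸ H) ∈
        {x : G ⧸ H | ∃ g : G, (QuotientGroup.mk g : G ⧸ H) = x ∧ g * t * g⁻¹ ∈ F} ∧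
      MaximalAntipodal (fun g => t * g * t⁻¹) H
        {x : G ⧸ H | ∃ g : G, (QuotientGroup.mk g : G ⧸ H) = x ∧ g * t * g⁻¹ ∈ F} := by
  subst hH
  refine ⟨⟨1, rfl, by simpa using hF.2.1⟩, fun g₁ g₂ h₁ h₂ => ?_, fun Y hY hXY => ?_⟩
  · rw [mk_mem_setOf_conj_mem_iff] at h₁ h₂
    exact (cartan_mem_centralizer_iff t g₁ g₂).mpr (commute_of_forall_sq_eq_one hF.1 h₁ h₂)
  · refine Set.Subset.antisymm (fun y hy => ?_) hXY
    obtain ⟨g, rfl⟩ := QuotientGroup.mk_surjective y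
    rw [mk_mem_setOf_conj_mem_iff]
    refine IsElemAbelianGenByConj.conj_mem_of_maximal ht hF hFmax fun f hf ⟨g₁, hfg⟩ => ?_
    subst hfg
    exact (cartan_mem_centralizer_iff t g g₁).mp
      (hY g g₁ hy (hXY ((mk_mem_setOf_conj_mem_iff t F g₁).mpr hf)))
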